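/- arXiv:2108.01432 — 4 statements merged into one kernel-verified Lean document; each statement's English description precedes it below -/
import Mathlib

section
/- (SIR principle) Let Y be a real random variable and Z an integrable random vector in R^p. Let P be an orthogonal projection on R^p such that Y and Z are conditionally independent given PZ, and suppose the linearity condition E[Z | PZ] = PZ holds almost surely. Then (I_p - P) E[Z | Y] = 0 almost surely, i.e., E[Z | Y] lies in the range of P almost surely. -/
/-!
Write `W = E[Z | Y]`. By the tower property and conditional independence,
`W = E[E[Z | Y, PZ] | Y] = E[E[Z | PZ] | Y]`, and by the linearity condition this is
`E[PZ | Y] = P W`; hence `(I - P) W = 0`. Conditional independence is only assumed for bounded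
test functions, so it is first extended to the coordinates of `Z` by truncation and dominated
convergence of conditional expectations.
-/

open MeasureTheory Filter
open scoped Topology Matrix

section Truncation

variable {α : Type*} [AddCommGroup α] [LinearOrder α] [IsOrderedAddMonoid α] {c : α}

lemma abs_max_neg_min_le_abs (hc : 0 ≤ c) (x : α) : |max (-c) (min c x)| ≤ |x| :=
  abs_le.2 ⟨le_max_of_le_right (le_min ((neg_nonpos.2 (abs_nonneg x)).trans hc) (neg_abs_le x)),
    max_le ((neg_nonpos.2 hc).trans (abs_nonneg x)) ((min_le_right _ _).trans (le_abs_self x))⟩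

lemma abs_max_neg_min_le (hc : 0 ≤ c) (x : α) : |max (-c) (min c x)| ≤ c :=
  abs_le.2 ⟨le_max_left _ _, max_le (neg_le_self hc) (min_le_left _ _)⟩

end Truncation

lemma tendsto_max_neg_min_atTop (x : ℝ) :
    Tendsto (fun n : ℕ => max (-(n : ℝ)) (min (n : ℝ) x)) atTop (𝓝 x) := by
  refine tendsto_const_nhds.congr' ?_
  filter_upwards [eventually_ge_atTop ⌈|x|⌉₊] with n hn
  have hx : |x| ≤ n := Nat.ceil_le.1 hn
  rw [min_eq_right (le_of_abs_le hx), max_eq_right (neg_le_of_abs_le hx)]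

namespace MeasureTheory
variable {Ω : Type*} {m₀ : MeasurableSpace Ω} {μ : Measure Ω}

lemma condExp_pi_ae_eq {ι E : Type*} [Fintype ι] [NormedAddCommGroup E] [NormedSpace ℝ E]
    [CompleteSpace E] {m : MeasurableSpace Ω} {X : Ω → ι → E} (hX : Integrable X μ) :
    μ[X|m] =ᵐ[μ] fun ω i => μ[fun ω' => X ω' i|m] ω := by
  have hcoord (i : ι) :=
    (ContinuousLinearMap.proj (R := ℝ) (φ := fun _ : ι => E) i).comp_condExp_comm (m := m) hX
  filter_upwards [ae_all_iff.2 hcoord] with ω hω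
  funext i
  exact hω i

lemma condExp_mulVec_apply {ι κ : Type*} [Fintype ι] [Fintype κ] {m : MeasurableSpace Ω}
    {X : Ω → κ → ℝ} (hX : Integrable X μ) (A : Matrix ι κ ℝ) (i : ι) :
    μ[fun ω => (A *ᵥ X ω) i|m] =ᵐ[μ] fun ω => (A *ᵥ fun k => μ[fun ω' => X ω' k|m] ω) i := by
  let T : (κ → ℝ) →L[ℝ] ℝ := (LinearMap.proj i ∘ₗ A.mulVecLin).toContinuousLinearMap
  filter_upwards [(T.comp_condExp_comm (m := m) hX).symm, condExp_pi_ae_eq (m := m) hX]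
    with ω h1 h2
  rw [show (fun ω => (A *ᵥ X ω) i) = T ∘ X from rfl, h1]
  simp [T, h2]

lemma condExp_ae_eq_of_dominated_convergence {E : Type*} [NormedAddCommGroup E]
    [NormedSpace ℝ E] [CompleteSpace E] {m₁ m₂ : MeasurableSpace Ω}
    (hm₁ : m₁ ≤ m₀) (hm₂ : m₂ ≤ m₀) [SigmaFinite (μ.trim hm₁)] [SigmaFinite (μ.trim hm₂)]
    {fs : ℕ → Ω → E} {f : Ω → E} (bound : Ω → ℝ)
    (hfs_meas : ∀ n, AEStronglyMeasurable[m₀] (fs n) μ) (h_int_bound : Integrable bound μ)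
    (hfs_bound : ∀ n, ∀ᵐ ω ∂μ, ‖fs n ω‖ ≤ bound ω)
    (hfs : ∀ᵐ ω ∂μ, Tendsto (fun n => fs n ω) atTop (𝓝 (f ω)))
    (hfs_eq : ∀ n, μ[fs n|m₁] =ᵐ[μ] μ[fs n|m₂]) :
    μ[f|m₁] =ᵐ[μ] μ[f|m₂] := by
  have hL1_eq : ∀ n, condExpL1 hm₁ μ (fs n) = condExpL1 hm₂ μ (fs n) := fun n =>
    Lp.ext <| (condExp_ae_eq_condExpL1 hm₁ _).symm.trans
      ((hfs_eq n).trans (condExp_ae_eq_condExpL1 hm₂ _))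
  have hlim : condExpL1 hm₁ μ f = condExpL1 hm₂ μ f := tendsto_nhds_unique
    ((tendsto_condExpL1_of_dominated_convergence hm₁ bound hfs_meas h_int_bound hfs_bound
      hfs).congr hL1_eq)
    (tendsto_condExpL1_of_dominated_convergence hm₂ bound hfs_meas h_int_bound hfs_bound hfs)
  calc μ[f|m₁] =ᵐ[μ] condExpL1 hm₁ μ f := condExp_ae_eq_condExpL1 hm₁ _
    _ = condExpL1 hm₂ μ f := by rw [hlim]
    _ =ᵐ[μ] μ[f|m₂] := (condExp_ae_eq_condExpL1 hm₂ _).symm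

/-- Hypotheses on `X` come before `m₁ m₂`: once these are in scope they would be picked up as the
instance in `Measurable X`. -/
lemma condExp_comp_ae_eq_of_forall_bounded [IsFiniteMeasure μ] {E : Type*} [MeasurableSpace E]
    {X : Ω → E} (hX : Measurable X) {f : E → ℝ} (hf : Measurable f)
    (hfX : Integrable (fun ω => f (X ω)) μ) {m₁ m₂ : MeasurableSpace Ω}
    (hm₁ : m₁ ≤ m₀) (hm₂ : m₂ ≤ m₀)
    (h : ∀ g : E → ℝ, Measurable g → (∃ C, ∀ z, |g z| ≤ C) →
      μ[fun ω => g (X ω)|m₁] =ᵐ[μ] μ[fun ω => g (X ω)|m₂]) :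
    μ[fun ω => f (X ω)|m₁] =ᵐ[μ] μ[fun ω => f (X ω)|m₂] := by
  have htrunc_meas (n : ℕ) : Measurable fun z => max (-(n : ℝ)) (min (n : ℝ) (f z)) :=
    measurable_const.max (measurable_const.min hf)
  exact condExp_ae_eq_of_dominated_convergence hm₁ hm₂ (fun ω => |f (X ω)|)
    (fun n => ((htrunc_meas n).comp hX).aestronglyMeasurable) hfX.abs
    (fun n => ae_of_all _ fun ω => abs_max_neg_min_le_abs n.cast_nonneg _)
    (ae_of_all _ fun ω => tendsto_max_neg_min_atTop _)
    (fun n => h _ (htrunc_meas n) ⟨n, fun z => abs_max_neg_min_le n.cast_nonneg _⟩)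

end MeasureTheory

/-- **SIR principle.** If `Y` and `Z` are conditionally independent given `PZ`
(for an orthogonal projection `P`) and the linearity condition `E[Z | PZ] = PZ` holds a.s.,
then `(I - P) E[Z | Y] = 0` almost surely. -/
theorem stmt_1 {Ω : Type*} [MeasurableSpace Ω] (μ : Measure Ω) [IsProbabilityMeasure μ]
    {p : ℕ} (Y : Ω → ℝ) (hY : Measurable Y)
    (Z : Ω → Fin p → ℝ) (hZmeas : Measurable Z) (hZint : Integrable Z μ)
    (P : Matrix (Fin p) (Fin p) ℝ) (hPproj : P * P = P) (hPsym : P.transpose = P)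
    (m mY : MeasurableSpace Ω)
    (hm : m = MeasurableSpace.comap (fun ω => P.mulVec (Z ω)) inferInstance)
    (hmY : mY = MeasurableSpace.comap Y inferInstance)
    (hCI : ∀ g : (Fin p → ℝ) → ℝ, Measurable g → (∃ Cg, ∀ z, |g z| ≤ Cg) →
      μ[(fun ω => g (Z ω))|mY ⊔ m] =ᵐ[μ] μ[(fun ω => g (Z ω))|m])
    (hLC : ∀ i, μ[(fun ω => Z ω i)|m] =ᵐ[μ] fun ω => P.mulVec (Z ω) i) :
    ∀ i, (fun ω => (1 - P).mulVec (fun j => (μ[(fun ω' => Z ω' j)|mY]) ω) i)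
      =ᵐ[μ] fun _ => (0 : ℝ) := by
  rename_i m₀ _
  intro i
  have hm_le : m ≤ m₀ :=
    hm ▸ (P.mulVecLin.continuous_of_finiteDimensional.measurable.comp hZmeas).comap_le
  have hmY_le : mY ≤ m₀ := hmY ▸ hY.comap_le
  have hsup_le : mY ⊔ m ≤ m₀ := sup_le hmY_le hm_le
  have hE_fixed : ∀ j, μ[fun ω => Z ω j|mY]
      =ᵐ[μ] fun ω => (P *ᵥ fun k => μ[fun ω' => Z ω' k|mY] ω) j := fun j =>
    calc μ[fun ω => Z ω j|mY]
        =ᵐ[μ] μ[μ[fun ω => Z ω j|mY ⊔ m]|mY] :=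
          (condExp_condExp_of_le le_sup_left hsup_le).symm
      _ =ᵐ[μ] μ[fun ω => (P *ᵥ Z ω) j|mY] := condExp_congr_ae <|
          (condExp_comp_ae_eq_of_forall_bounded hZmeas (measurable_pi_apply j)
            (integrable_pi_iff.1 hZint j) hsup_le hm_le hCI).trans (hLC j)
      _ =ᵐ[μ] _ := condExp_mulVec_apply hZint P j
  filter_upwards [ae_all_iff.2 hE_fixed] with ω hω
  rw [Matrix.sub_mulVec, Matrix.one_mulVec, ← funext hω, sub_self]
  rfl
end

section
/- (Bayes AM risk formula) In the setting of the AM-risk Bayes classifier, the minimal AM risk equals R_AM(h*) = (1/2) E[ min( η(X)/π, (1-η(X))/(1-π) ) ], where h*(x) = 1{η(x) > π}. -/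
open MeasureTheory Filter
open scoped Topology

/-- The arithmetic-mean (AM) risk of a classifier `h` (identified with the set where it
predicts `1`): `(1/2)[P(h(X)=1 | T=0) + P(h(X)=0 | T=1)]`. -/
noncomputable def amRisk {Ω E : Type*} [MeasurableSpace Ω] (μ : Measure Ω)
    (X : Ω → E) (T : Ω → Bool) (h : E → Prop) : ℝ :=
  (1/2) * ((μ {ω | h (X ω) ∧ T ω = false}).toReal / (μ {ω | T ω = false}).toReal
    + (μ {ω | ¬ h (X ω) ∧ T ω = true}).toReal / (μ {ω | T ω = true}).toReal)

/-! On `σ(X)`-measurable sets the regression function `η(X) = E[1{T = 1} | X]` integrates to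
the probability of `· ∩ {T = 1}`, and `1 - η(X)` to that of `· \ {T = 1}`. Hence the AM risk of
any measurable classifier with acceptance region `A` is
`(1/2) [∫_A (1 - η(X))/(1 - π) + ∫_{Aᶜ} η(X)/π]`, and for `A = {η(X) > π}` the integrand
is, on each piece, the smaller of `η(X)/π` and `(1 - η(X))/(1 - π)`. -/

lemma min_div_div_one_sub_eq_ite {π e : ℝ} (hπ0 : 0 < π) (hπ1 : π < 1) :
    min (e / π) ((1 - e) / (1 - π)) = if π < e then (1 - e) / (1 - π) else e / π := by
  have hπ1' : 0 < 1 - π := by linarith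
  split_ifs with he
  · exact min_eq_right ((div_le_div_iff₀ hπ1' hπ0).2 (by nlinarith))
  · exact min_eq_left ((div_le_div_iff₀ hπ0 hπ1').2 (by nlinarith))

section RegressionFunction

variable {Ω : Type*} {m m₀ : MeasurableSpace Ω} {μ : Measure[m₀] Ω} [IsFiniteMeasure μ]
  {B s : Set Ω} {g : Ω → ℝ}

lemma setIntegral_eq_measureReal_inter_of_ae_eq_condExp (hm : m ≤ m₀) (hB : MeasurableSet B)
    (hg : g =ᵐ[μ] μ[B.indicator 1 | m]) (hs : MeasurableSet[m] s) :
    ∫ ω in s, g ω ∂μ = μ.real (s ∩ B) := by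
  rw [setIntegral_congr_ae (hm s hs) (hg.mono fun _ h _ => h),
    setIntegral_condExp hm ((integrable_const 1).indicator hB) hs, setIntegral_indicator hB]
  simp

lemma setIntegral_one_sub_eq_measureReal_diff_of_ae_eq_condExp (hm : m ≤ m₀)
    (hB : MeasurableSet B) (hg : g =ᵐ[μ] μ[B.indicator 1 | m]) (hs : MeasurableSet[m] s) :
    ∫ ω in s, (1 - g ω) ∂μ = μ.real (s \ B) := by
  have hgi : Integrable g μ := integrable_condExp.congr hg.symm
  rw [integral_sub (integrable_const 1).integrableOn hgi.integrableOn,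
    setIntegral_eq_measureReal_inter_of_ae_eq_condExp hm hB hg hs, setIntegral_const,
    smul_eq_mul, mul_one, ← measureReal_inter_add_sdiff (s := s) hB]
  ring

end RegressionFunction

lemma amRisk_eq_setIntegral {Ω E : Type*} [MeasurableSpace Ω] [MeasurableSpace E]
    {μ : Measure Ω} [IsProbabilityMeasure μ] {X : Ω → E} {T : Ω → Bool}
    (hX : Measurable X) (hT : Measurable T) {g : Ω → ℝ}
    (hg : g =ᵐ[μ]
      μ[(fun ω => if T ω = true then (1:ℝ) else 0) | MeasurableSpace.comap X inferInstance])
    {h : E → Prop} (hh : MeasurableSet {x | h x}) :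
    amRisk μ X T h =
      (1/2) * ((∫ ω in X ⁻¹' {x | h x}, (1 - g ω) ∂μ) / (1 - μ.real {ω | T ω = true})
        + (∫ ω in (X ⁻¹' {x | h x})ᶜ, g ω ∂μ) / μ.real {ω | T ω = true}) := by
  set B := {ω | T ω = true}
  have hB : MeasurableSet B := hT (measurableSet_singleton true)
  have hind : (fun ω => if T ω = true then (1:ℝ) else 0) = B.indicator 1 := by
    funext ω
    simp [B, Set.indicator]
  have hA : MeasurableSet[MeasurableSpace.comap X inferInstance] (X ⁻¹' {x | h x}) :=
    ⟨_, hh, rfl⟩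
  rw [hind] at hg
  rw [setIntegral_one_sub_eq_measureReal_diff_of_ae_eq_condExp hX.comap_le hB hg hA,
    setIntegral_eq_measureReal_inter_of_ae_eq_condExp hX.comap_le hB hg hA.compl,
    ← probReal_compl_eq_one_sub hB]
  simp only [amRisk, ← measureReal_def]
  congr 4 <;> ext ω <;> simp [B]

/-- **Bayes AM risk formula.** The minimal AM risk, achieved by
`h*(x) = 1{η(x) > π}`, equals `(1/2) E[min(η(X)/π, (1-η(X))/(1-π))]`. -/
theorem stmt_11 {Ω : Type*} [MeasurableSpace Ω] (μ : Measure Ω) [IsProbabilityMeasure μ]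
    {p : ℕ} (X : Ω → Fin p → ℝ) (T : Ω → Bool)
    (hX : Measurable X) (hT : Measurable T)
    (π : ℝ) (hπ : π = (μ {ω | T ω = true}).toReal) (hπ0 : 0 < π) (hπ1 : π < 1)
    (η : (Fin p → ℝ) → ℝ) (hη : Measurable η)
    (hηver : (fun ω => η (X ω)) =ᵐ[μ]
      μ[(fun ω => if T ω = true then (1:ℝ) else 0)|MeasurableSpace.comap X inferInstance]) :
    amRisk μ X T (fun x => π < η x)
      = (1/2) * ∫ ω, min (η (X ω) / π) ((1 - η (X ω)) / (1 - π)) ∂μ := by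
  classical
  have hA : MeasurableSet {x | π < η x} := measurableSet_lt measurable_const hη
  have hη_int : Integrable (fun ω => η (X ω)) μ := integrable_condExp.congr hηver.symm
  have hπ' : μ.real {ω | T ω = true} = π := hπ.symm
  have hmin : (fun ω => min (η (X ω) / π) ((1 - η (X ω)) / (1 - π)))
      = (X ⁻¹' {x | π < η x}).piecewise
          (fun ω => (1 - η (X ω)) / (1 - π)) (fun ω => η (X ω) / π) :=
    funext fun _ => min_div_div_one_sub_eq_ite hπ0 hπ1
  have hη_compl_int : Integrable (fun ω => (1 - η (X ω)) / (1 - π)) μ :=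
    ((integrable_const 1).sub hη_int).div_const _
  rw [amRisk_eq_setIntegral hX hT hηver hA, hπ', hmin, integral_piecewise (hX hA)
      hη_compl_int.integrableOn (hη_int.div_const _).integrableOn, integral_div, integral_div]
end

section
/- (Dimension reduction bias bound for the AM risk) Let X = (V, W) and T = 1{Y>y} with π = P(Y>y) ≤ 1/2. Let η(x) = P(T=1 | X=x) and η_W(w) = P(T=1 | W=w). Let h* and h*_W be the Bayes classifiers for the full and reduced problems. Then R_AM(h*_W) - R_AM(h*) ≤ (1/2) E| P(Y>y | V,W) - P(Y>y | W) | / P(Y>y). In particular, if Y is tail conditionally independent of V given W, then R_AM(h*_W) - R_AM(h*) → 0 as y → y+. -/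
open MeasureTheory Filter
open scoped Topology

/-!
If the region `S` where a classifier predicts `1` is measurable for a σ-algebra `m`, and
`c = P(T = 1 | m)`, `π = P(T = 1)`, then
`R_AM = ½ (∫_S (1 - c)/(1 - π) + ∫_{Sᶜ} c/π) ≥ ½ ∫ min ((1 - c)/(1 - π)) (c/π)`,
with equality for the Bayes region `S = {c > π}`. Hence both Bayes classifiers have risk
`½ ∫ min(…)` of their own posterior, and the reduced one, being `σ(V, W)`-measurable, cannot
beat the full one. Since `π ≤ 1/2`, `q ↦ min ((1 - q)/(1 - π)) (q/π)` is `1/π`-Lipschitz, which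
bounds the gap by `½ E|c - c_W| / π`; the limit follows by squeezing.
-/

section MinIntegral

variable {Ω : Type*} [MeasurableSpace Ω] {μ : Measure Ω} {f g : Ω → ℝ} {S : Set Ω}

theorem integral_min_le_setIntegral_add_setIntegral_compl (hf : Integrable f μ)
    (hg : Integrable g μ) (hS : MeasurableSet S) :
    ∫ ω, min (f ω) (g ω) ∂μ ≤ ∫ ω in S, f ω ∂μ + ∫ ω in Sᶜ, g ω ∂μ := by
  classical
  rw [← integral_piecewise hS hf.integrableOn hg.integrableOn]
  refine integral_mono (hf.inf hg) (Integrable.piecewise hS hf.integrableOn hg.integrableOn)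
    fun ω => ?_
  by_cases hω : ω ∈ S
  · simp [hω]
  · simp [hω]

theorem setIntegral_add_setIntegral_compl_eq_integral_min (hf : Integrable f μ)
    (hg : Integrable g μ) (hS : MeasurableSet S) (hSfg : ∀ᵐ ω ∂μ, ω ∈ S ↔ f ω < g ω) :
    ∫ ω in S, f ω ∂μ + ∫ ω in Sᶜ, g ω ∂μ = ∫ ω, min (f ω) (g ω) ∂μ := by
  classical
  rw [← integral_piecewise hS hf.integrableOn hg.integrableOn]
  refine integral_congr_ae ?_
  filter_upwards [hSfg] with ω hω
  by_cases h : ω ∈ S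
  · simp [h, min_eq_left (hω.1 h).le]
  · simp [h, min_eq_right (not_lt.1 (mt hω.2 h))]

end MinIntegral

/-- Expected cost of the better prediction given posterior `q`: predicting `1` costs
`(1 - q) / (1 - π)`, predicting `0` costs `q / π`. -/
noncomputable def bayesAmLoss (π q : ℝ) : ℝ := min ((1 - q) / (1 - π)) (q / π)

theorem one_sub_div_lt_div_iff {π q : ℝ} (hπ₀ : 0 < π) (hπ₁ : π < 1) :
    (1 - q) / (1 - π) < q / π ↔ π < q := by
  rw [div_lt_div_iff₀ (by linarith) hπ₀]
  constructor <;> intro h <;> nlinarith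

theorem bayesAmLoss_sub_bayesAmLoss_le {π a b : ℝ} (hπ : 0 < π) (hπ_half : π ≤ 1 / 2) :
    bayesAmLoss π a - bayesAmLoss π b ≤ |a - b| / π := by
  have hπ_le : π ≤ 1 - π := by linarith
  calc _ ≤ |min ((1 - a) / (1 - π)) (a / π) - min ((1 - b) / (1 - π)) (b / π)| := le_abs_self _
    _ ≤ max |(1 - a) / (1 - π) - (1 - b) / (1 - π)| |a / π - b / π| :=
      abs_min_sub_min_le_max _ _ _ _
    _ = max (|a - b| / (1 - π)) (|a - b| / π) := by
      rw [← sub_div, ← sub_div, abs_div, abs_div, abs_of_pos (by linarith : 0 < 1 - π),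
        abs_of_pos hπ, abs_sub_comm (1 - a), sub_sub_sub_cancel_left]
    _ = |a - b| / π := max_eq_right (div_le_div_of_nonneg_left (abs_nonneg _) hπ hπ_le)

section CondProb

variable {Ω : Type*} {m : MeasurableSpace Ω} [mΩ : MeasurableSpace Ω] {μ : Measure Ω}
  {p : Ω → Prop} [DecidablePred p] {S : Set Ω}

noncomputable def condProb (μ : Measure Ω) (m : MeasurableSpace Ω) (p : Ω → Prop)
    [DecidablePred p] : Ω → ℝ :=
  μ[fun ω => if p ω then 1 else 0 | m]

theorem integrable_condProb : Integrable (condProb μ m p) μ := integrable_condExp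

variable [IsFiniteMeasure μ]

theorem setIntegral_condProb (hm : m ≤ mΩ) (hp : MeasurableSet {ω | p ω})
    (hS : MeasurableSet[m] S) :
    ∫ ω in S, condProb μ m p ω ∂μ = μ.real (S ∩ {ω | p ω}) := by
  have hind : (fun ω => if p ω then (1 : ℝ) else 0) = {ω | p ω}.indicator 1 := by
    ext ω; by_cases h : p ω <;> simp [h]
  have hint : Integrable (fun ω => if p ω then (1 : ℝ) else 0) μ := by
    rw [hind]; exact (integrable_const 1).indicator hp
  rw [condProb, setIntegral_condExp hm hint hS, hind, setIntegral_indicator hp]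
  simp

theorem setIntegral_one_sub_condProb (hm : m ≤ mΩ) (hp : MeasurableSet {ω | p ω})
    (hS : MeasurableSet[m] S) :
    ∫ ω in S, (1 - condProb μ m p ω) ∂μ = μ.real (S \ {ω | p ω}) := by
  rw [integral_sub (integrable_const 1) integrable_condProb.integrableOn,
    setIntegral_condProb hm hp hS, setIntegral_const, smul_eq_mul, mul_one,
    ← measureReal_inter_add_sdiff (s := S) hp]
  ring

end CondProb

section AmRisk

variable {Ω F : Type*} {m : MeasurableSpace Ω} [mΩ : MeasurableSpace Ω] {μ : Measure Ω}
  [IsProbabilityMeasure μ] {p : Ω → Prop} [DecidablePred p] {X : Ω → F} {h : F → Prop}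
  {S : Set Ω}

theorem integrable_bayesAmLoss_condProb :
    Integrable (fun ω => bayesAmLoss (μ.real {ω | p ω}) (condProb μ m p ω)) μ :=
  (((integrable_const 1).sub integrable_condProb).div_const _).inf
    (integrable_condProb.div_const _)

theorem amRisk_eq_setIntegral_add_setIntegral_compl (hm : m ≤ mΩ)
    (hp : MeasurableSet {ω | p ω}) (hS : MeasurableSet[m] S) (hXS : ∀ ω, h (X ω) ↔ ω ∈ S) :
    amRisk μ X (fun ω => decide (p ω)) h =
      1 / 2 * (∫ ω in S, (1 - condProb μ m p ω) / (1 - μ.real {ω | p ω}) ∂μ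
        + ∫ ω in Sᶜ, condProb μ m p ω / μ.real {ω | p ω} ∂μ) := by
  have hS_false : {ω | h (X ω) ∧ decide (p ω) = false} = S \ {ω | p ω} := by
    ext ω; simp [hXS]
  have hS_true : {ω | ¬ h (X ω) ∧ decide (p ω) = true} = Sᶜ ∩ {ω | p ω} := by
    ext ω; simp [hXS]
  have h_false : {ω | decide (p ω) = false} = {ω | p ω}ᶜ := by ext ω; simp
  have h_true : {ω | decide (p ω) = true} = {ω | p ω} := by ext ω; simp
  have h_compl : (μ {ω | p ω}ᶜ).toReal = 1 - μ.real {ω | p ω} := probReal_compl_eq_one_sub hp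
  rw [amRisk, hS_false, hS_true, h_false, h_true, h_compl, integral_div, integral_div,
    setIntegral_one_sub_condProb hm hp hS, setIntegral_condProb hm hp hS.compl]
  rfl

theorem integral_bayesAmLoss_le_amRisk (hm : m ≤ mΩ) (hp : MeasurableSet {ω | p ω})
    (hS : MeasurableSet[m] S) (hXS : ∀ ω, h (X ω) ↔ ω ∈ S) :
    1 / 2 * ∫ ω, bayesAmLoss (μ.real {ω | p ω}) (condProb μ m p ω) ∂μ ≤
      amRisk μ X (fun ω => decide (p ω)) h := by
  rw [amRisk_eq_setIntegral_add_setIntegral_compl hm hp hS hXS]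
  gcongr
  exact integral_min_le_setIntegral_add_setIntegral_compl
    (((integrable_const 1).sub integrable_condProb).div_const _)
    (integrable_condProb.div_const _) (hm _ hS)

theorem amRisk_eq_integral_bayesAmLoss {G : Type*} [MeasurableSpace G] {Z : Ω → G}
    (hZ : Measurable Z) {ζ : G → ℝ} (hζ : Measurable ζ)
    (hζZ : (fun ω => ζ (Z ω)) =ᵐ[μ] condProb μ (MeasurableSpace.comap Z inferInstance) p)
    (hp : MeasurableSet {ω | p ω}) (hπ₀ : 0 < μ.real {ω | p ω}) (hπ₁ : μ.real {ω | p ω} < 1)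
    (hXZ : ∀ ω, h (X ω) ↔ μ.real {ω | p ω} < ζ (Z ω)) :
    amRisk μ X (fun ω => decide (p ω)) h =
      1 / 2 * ∫ ω, bayesAmLoss (μ.real {ω | p ω})
        (condProb μ (MeasurableSpace.comap Z inferInstance) p ω) ∂μ := by
  have hS : MeasurableSet[MeasurableSpace.comap Z inferInstance]
      (Z ⁻¹' {z | μ.real {ω | p ω} < ζ z}) :=
    ⟨_, measurableSet_lt measurable_const hζ, rfl⟩
  rw [amRisk_eq_setIntegral_add_setIntegral_compl hZ.comap_le hp hS hXZ]
  congr 1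
  refine setIntegral_add_setIntegral_compl_eq_integral_min
    (((integrable_const 1).sub integrable_condProb).div_const _)
    (integrable_condProb.div_const _) (hZ.comap_le _ hS) ?_
  filter_upwards [hζZ] with ω hω
  rw [one_sub_div_lt_div_iff hπ₀ hπ₁, ← hω]
  rfl

end AmRisk

section DimensionReduction

variable {Ω F G : Type*} [MeasurableSpace Ω] [MeasurableSpace F] [MeasurableSpace G]
  {μ : Measure Ω} [IsProbabilityMeasure μ] {p : Ω → Prop} [DecidablePred p]
  {X : Ω → F} {r : F → G} {η : F → ℝ} {ηr : G → ℝ}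

theorem amRisk_bayes_le_amRisk_reduced (hX : Measurable X) (hr : Measurable r)
    (hη : Measurable η) (hηr : Measurable ηr)
    (hηX : (fun ω => η (X ω)) =ᵐ[μ] condProb μ (MeasurableSpace.comap X inferInstance) p)
    (hp : MeasurableSet {ω | p ω}) (hπ₀ : 0 < μ.real {ω | p ω})
    (hπ₁ : μ.real {ω | p ω} < 1) :
    amRisk μ X (fun ω => decide (p ω)) (fun x => μ.real {ω | p ω} < η x) ≤
      amRisk μ X (fun ω => decide (p ω)) (fun x => μ.real {ω | p ω} < ηr (r x)) := by
  rw [amRisk_eq_integral_bayesAmLoss (X := X) (h := fun x => _ < η x) hX hη hηX hp hπ₀ hπ₁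
    fun _ => Iff.rfl]
  exact integral_bayesAmLoss_le_amRisk hX.comap_le hp
    ⟨{x | μ.real {ω | p ω} < ηr (r x)}, measurableSet_lt measurable_const (hηr.comp hr), rfl⟩
    fun _ => Iff.rfl

theorem amRisk_reduced_sub_amRisk_bayes_le (hX : Measurable X) (hr : Measurable r)
    (hη : Measurable η) (hηr : Measurable ηr)
    (hηX : (fun ω => η (X ω)) =ᵐ[μ] condProb μ (MeasurableSpace.comap X inferInstance) p)
    (hηrX : (fun ω => ηr (r (X ω))) =ᵐ[μ]
      condProb μ (MeasurableSpace.comap (fun ω => r (X ω)) inferInstance) p)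
    (hp : MeasurableSet {ω | p ω}) (hπ₀ : 0 < μ.real {ω | p ω})
    (hπ_half : μ.real {ω | p ω} ≤ 1 / 2) :
    amRisk μ X (fun ω => decide (p ω)) (fun x => μ.real {ω | p ω} < ηr (r x)) -
        amRisk μ X (fun ω => decide (p ω)) (fun x => μ.real {ω | p ω} < η x) ≤
      1 / 2 * ((∫ ω, |condProb μ (MeasurableSpace.comap X inferInstance) p ω -
        condProb μ (MeasurableSpace.comap (fun ω => r (X ω)) inferInstance) p ω| ∂μ) /
          μ.real {ω | p ω}) := by
  have hπ₁ : μ.real {ω | p ω} < 1 := by linarith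
  rw [amRisk_eq_integral_bayesAmLoss (X := X) (h := fun x => _ < η x) hX hη hηX hp hπ₀ hπ₁
      fun _ => Iff.rfl,
    amRisk_eq_integral_bayesAmLoss (X := X) (h := fun x => _ < ηr (r x)) (hr.comp hX) hηr hηrX hp
      hπ₀ hπ₁ fun _ => Iff.rfl,
    ← mul_sub, ← integral_sub integrable_bayesAmLoss_condProb integrable_bayesAmLoss_condProb,
    ← integral_div]
  gcongr
  · exact integrable_bayesAmLoss_condProb.sub integrable_bayesAmLoss_condProb
  · exact (integrable_condProb.sub integrable_condProb).abs.div_const _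
  · intro ω
    dsimp only
    rw [abs_sub_comm]
    exact bayesAmLoss_sub_bayesAmLoss_le hπ₀ hπ_half

end DimensionReduction

/-- **Dimension reduction bias bound for the AM risk.** With `X = (V,W)`,
`T = 1{Y>y}`, `π = P(Y>y) ≤ 1/2`, `η` and `η_W` versions of `P(T=1|X)` and `P(T=1|W)`, and the
Bayes classifiers `h*(x) = 1{η(x)>π}`, `h*_W(v,w) = 1{η_W(w)>π}`, the dimension reduction bias
satisfies `R_AM(h*_W) - R_AM(h*) ≤ (1/2) E|P(Y>y|V,W) - P(Y>y|W)|/P(Y>y)`; in particular,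
under tail conditional independence of `Y` from `V` given `W`, this bias tends to `0` as
`y → y⁺` (modelled by the filter `l`). -/
theorem stmt_12 {Ω E1 E2 : Type*} [MeasurableSpace Ω] [MeasurableSpace E1] [MeasurableSpace E2]
    (μ : Measure Ω) [IsProbabilityMeasure μ]
    (Y : Ω → ℝ) (V : Ω → E1) (W : Ω → E2)
    (hY : Measurable Y) (hV : Measurable V) (hW : Measurable W)
    (η : ℝ → E1 × E2 → ℝ) (ηW : ℝ → E2 → ℝ)
    (hηmeas : ∀ y, Measurable (η y)) (hηWmeas : ∀ y, Measurable (ηW y))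
    (hηver : ∀ y, (fun ω => η y (V ω, W ω)) =ᵐ[μ]
      μ[(fun ω' => if y < Y ω' then (1:ℝ) else 0)|
        MeasurableSpace.comap (fun ω => (V ω, W ω)) inferInstance])
    (hηWver : ∀ y, (fun ω => ηW y (W ω)) =ᵐ[μ]
      μ[(fun ω' => if y < Y ω' then (1:ℝ) else 0)|MeasurableSpace.comap W inferInstance])
    (l : Filter ℝ)
    (hpos : ∀ᶠ y in l, 0 < (μ {ω | y < Y ω}).toReal)
    (hhalf : ∀ᶠ y in l, (μ {ω | y < Y ω}).toReal ≤ 1/2)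
    (hTCI : Tendsto (fun y =>
        (∫ ω, |(μ[(fun ω' => if y < Y ω' then (1:ℝ) else 0)|
                MeasurableSpace.comap (fun ω => (V ω, W ω)) inferInstance]) ω
              - (μ[(fun ω' => if y < Y ω' then (1:ℝ) else 0)|
                MeasurableSpace.comap W inferInstance]) ω| ∂μ)
          / (μ {ω | y < Y ω}).toReal) l (𝓝 0)) :
    (∀ y : ℝ, 0 < (μ {ω | y < Y ω}).toReal → (μ {ω | y < Y ω}).toReal ≤ 1/2 →
      amRisk μ (fun ω => (V ω, W ω)) (fun ω => decide (y < Y ω))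
          (fun x => (μ {ω | y < Y ω}).toReal < ηW y x.2)
        - amRisk μ (fun ω => (V ω, W ω)) (fun ω => decide (y < Y ω))
            (fun x => (μ {ω | y < Y ω}).toReal < η y x)
      ≤ (1/2) * ((∫ ω, |(μ[(fun ω' => if y < Y ω' then (1:ℝ) else 0)|
                MeasurableSpace.comap (fun ω => (V ω, W ω)) inferInstance]) ω
              - (μ[(fun ω' => if y < Y ω' then (1:ℝ) else 0)|
                MeasurableSpace.comap W inferInstance]) ω| ∂μ)
          / (μ {ω | y < Y ω}).toReal))
    ∧ Tendsto (fun y =>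
        amRisk μ (fun ω => (V ω, W ω)) (fun ω => decide (y < Y ω))
            (fun x => (μ {ω | y < Y ω}).toReal < ηW y x.2)
          - amRisk μ (fun ω => (V ω, W ω)) (fun ω => decide (y < Y ω))
              (fun x => (μ {ω | y < Y ω}).toReal < η y x)) l (𝓝 0) := by
  have hX : Measurable fun ω => (V ω, W ω) := hV.prodMk hW
  have hp : ∀ y, MeasurableSet {ω | y < Y ω} := fun y => measurableSet_lt measurable_const hY
  have hbound := fun y (hπ₀ : 0 < (μ {ω | y < Y ω}).toReal)
      (hπ_half : (μ {ω | y < Y ω}).toReal ≤ 1 / 2) =>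
    amRisk_reduced_sub_amRisk_bayes_le hX measurable_snd (hηmeas y) (hηWmeas y) (hηver y)
      (hηWver y) (hp y) hπ₀ hπ_half
  refine ⟨hbound, ?_⟩
  have hbound_lim := hTCI.const_mul (1 / 2)
  rw [mul_zero] at hbound_lim
  refine tendsto_of_tendsto_of_tendsto_of_le_of_le' tendsto_const_nhds hbound_lim ?_ ?_
  · filter_upwards [hpos, hhalf] with y hπ₀ hπ_half
    exact sub_nonneg.2 (amRisk_bayes_le_amRisk_reduced hX measurable_snd (hηmeas y)
      (hηWmeas y) (hηver y) (hp y) hπ₀ (hπ_half.trans_lt (by norm_num)))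
  · filter_upwards [hpos, hhalf] with y hπ₀ hπ_half using hbound y hπ₀ hπ_half
end

section
/- (Additive heavy-tailed model satisfies TCI) Let Y = V + Wξ where V ∈ [a,b] (−∞ < a < b < ∞), W ∈ [c,d] with 0 < c < d < ∞, V, W, ξ mutually independent, and ξ has continuous survival function S_ξ with y^α S_ξ(y) → C as y → ∞ for some α, C > 0. Assume V and W have densities f_1, f_2 and E[W^{2α}] < ∞. Then E| P(Y>y | V, W) - P(Y>y | W) | / P(Y>y) → 0 as y → ∞. -/
open MeasureTheory Filter ProbabilityTheory Set
open scoped Topology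

/-!
Put `g(v, w, y) = y ^ α * S ((y - v) / w) / w ^ α`. Regular variation of `S` makes `g → C`
uniformly on the box `[a, b] × [c, d]` as `y → ∞`. By independence of `(V, W)` and `ξ`,
`P(Y > y | V, W) = S ((y - V) / W) = (W / y) ^ α * g(V, W, y)`, so for large `y` it lies within
`ε (d / y) ^ α` of the `W`-measurable variable `L = C (W / y) ^ α`. As `P(Y > y | W)` is the
conditional expectation of `P(Y > y | V, W)` given `W`, and conditional expectation fixes `L` and
contracts `L¹`, the numerator is at most `2 ε (d / y) ^ α`, while
`P(Y > y) ≥ (C / 2) (c / y) ^ α`.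
-/

theorem ProbabilityTheory.IndepFun.condExp_comp_prodMk_ae_eq_integral {Ω β γ : Type*}
    [MeasurableSpace Ω] [mβ : MeasurableSpace β] [MeasurableSpace γ] [StandardBorelSpace γ] [Nonempty γ]
    {μ : Measure Ω} [IsFiniteMeasure μ] {X : Ω → β} {Y : Ω → γ} {f : β × γ → ℝ}
    (hX : Measurable X) (hY : Measurable Y) (hXY : IndepFun X Y μ) (hf : StronglyMeasurable f)
    (hf_int : Integrable (fun ω => f (X ω, Y ω)) μ) :
    μ[fun ω => f (X ω, Y ω) | mβ.comap X] =ᵐ[μ] fun ω => ∫ z, f (X ω, z) ∂(μ.map Y) := by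
  have hκ : condDistrib Y X μ =ᵐ[μ.map X] Kernel.const β (μ.map Y) := by
    rw [condDistrib_ae_eq_iff_measure_eq_compProd X hY.aemeasurable, Measure.compProd_const]
    exact (indepFun_iff_map_prod_eq_prod_map_map hX.aemeasurable hY.aemeasurable).1 hXY
  filter_upwards [condExp_prod_ae_eq_integral_condDistrib hX hY.aemeasurable hf hf_int,
    ae_of_ae_map hX.aemeasurable hκ] with ω h1 h2
  rw [h1, h2, Kernel.const_apply]

theorem condExp_indicator_lt_add_mul_ae_eq {Ω : Type*} [MeasurableSpace Ω] {μ : Measure Ω}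
    [IsFiniteMeasure μ] {V W ξ : Ω → ℝ} (hV : Measurable V) (hW : Measurable W)
    (hξ : Measurable ξ) (hI : IndepFun (fun ω => (V ω, W ω)) ξ μ) (hWpos : ∀ᵐ ω ∂μ, 0 < W ω)
    (y : ℝ) :
    μ[fun ω => if y < V ω + W ω * ξ ω then (1 : ℝ) else 0 |
        MeasurableSpace.comap (fun ω => (V ω, W ω)) inferInstance] =ᵐ[μ]
      fun ω => (μ {ω' | (y - V ω) / W ω < ξ ω'}).toReal := by
  have hs : MeasurableSet {q : (ℝ × ℝ) × ℝ | y < q.1.1 + q.1.2 * q.2} :=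
    measurableSet_lt measurable_const (by fun_prop)
  have hf : StronglyMeasurable fun q : (ℝ × ℝ) × ℝ =>
      if y < q.1.1 + q.1.2 * q.2 then (1 : ℝ) else 0 :=
    (Measurable.ite hs measurable_const measurable_const).stronglyMeasurable
  have hf_int : Integrable (fun ω => if y < V ω + W ω * ξ ω then (1 : ℝ) else 0) μ :=
    .of_bound (hf.comp_measurable ((hV.prodMk hW).prodMk hξ)).aestronglyMeasurable 1
      (ae_of_all _ fun ω => by split_ifs <;> simp)
  filter_upwards [hI.condExp_comp_prodMk_ae_eq_integral (hV.prodMk hW) hξ hf hf_int,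
    hWpos] with ω h hω
  have hz : MeasurableSet {z | y < V ω + W ω * z} :=
    measurableSet_lt measurable_const (by fun_prop)
  have hpre : {ω' | (y - V ω) / W ω < ξ ω'} = ξ ⁻¹' {z | y < V ω + W ω * z} := by
    ext ω'
    simp only [mem_ofPred_eq, mem_preimage, div_lt_iff₀ hω]
    constructor <;> intro h <;> linarith
  rw [h, hpre, ← Measure.map_apply hξ hz, ← measureReal_def, ← integral_indicator_one hz]
  rfl

section CondExp

variable {Ω : Type*} {m₁ m₂ : MeasurableSpace Ω} [m₀ : MeasurableSpace Ω] {μ : Measure Ω}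
  {f L : Ω → ℝ}

theorem integral_abs_condExp_sub_condExp_le [IsFiniteMeasure μ] (hm₂₁ : m₂ ≤ m₁)
    (hm₁ : m₁ ≤ m₀) (hLm : StronglyMeasurable[m₂] L) (hL : Integrable L μ) :
    ∫ ω, |μ[f|m₁] ω - μ[f|m₂] ω| ∂μ ≤ 2 * ∫ ω, |μ[f|m₁] ω - L ω| ∂μ := by
  have hA : Integrable (μ[f|m₁]) μ := integrable_condExp
  have hLB : (fun ω => L ω - μ[f|m₂] ω) =ᵐ[μ] μ[L - μ[f|m₁]|m₂] := by
    filter_upwards [condExp_sub hL hA m₂, condExp_condExp_of_le (f := f) hm₂₁ hm₁] with ω h1 h2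
    rw [h1, Pi.sub_apply, h2, condExp_of_stronglyMeasurable (hm₂₁.trans hm₁) hLm hL]
  have hAL : Integrable (fun ω => |μ[f|m₁] ω - L ω|) μ := (hA.sub hL).abs
  have hLB_int : Integrable (fun ω => |L ω - μ[f|m₂] ω|) μ := (hL.sub integrable_condExp).abs
  have hLB_le : ∫ ω, |L ω - μ[f|m₂] ω| ∂μ ≤ ∫ ω, |μ[f|m₁] ω - L ω| ∂μ := by
    refine (integral_congr_ae (hLB.fun_comp abs)).trans_le ?_
    simpa only [Function.comp_apply, Pi.sub_apply, abs_sub_comm (L _)] using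
      integral_abs_condExp_le (m := m₂) (μ := μ) (L - μ[f|m₁])
  calc ∫ ω, |μ[f|m₁] ω - μ[f|m₂] ω| ∂μ
      ≤ ∫ ω, (|μ[f|m₁] ω - L ω| + |L ω - μ[f|m₂] ω|) ∂μ :=
        integral_mono (hA.sub integrable_condExp).abs (hAL.add hLB_int)
          fun ω => abs_sub_le _ _ _
    _ ≤ 2 * ∫ ω, |μ[f|m₁] ω - L ω| ∂μ := by
        rw [integral_add hAL hLB_int]
        linarith

theorem integral_abs_condExp_sub_condExp_div_integral_le [IsProbabilityMeasure μ]
    (hm₂₁ : m₂ ≤ m₁) (hm₁ : m₁ ≤ m₀) {G : Ω → ℝ} (hG : G =ᵐ[μ] μ[f|m₁])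
    (hLm : StronglyMeasurable[m₂] L) (hL : Integrable L μ) {δ γ : ℝ} (hγ : 0 < γ)
    (hGL : ∀ᵐ ω ∂μ, |G ω - L ω| ≤ δ) (hGγ : ∀ᵐ ω ∂μ, γ ≤ G ω) :
    (∫ ω, |μ[f|m₁] ω - μ[f|m₂] ω| ∂μ) / ∫ ω, f ω ∂μ ≤ 2 * δ / γ := by
  have hGi : Integrable G μ := integrable_condExp.congr hG.symm
  have hδ : 0 ≤ δ := let ⟨_, h⟩ := hGL.exists; (abs_nonneg _).trans h
  have hnum : ∫ ω, |μ[f|m₁] ω - μ[f|m₂] ω| ∂μ ≤ 2 * δ := by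
    refine (integral_abs_condExp_sub_condExp_le hm₂₁ hm₁ hLm hL).trans ?_
    have hGL' : ∀ᵐ ω ∂μ, |μ[f|m₁] ω - L ω| ≤ δ := by
      filter_upwards [hG, hGL] with ω h1 h2
      rwa [← h1]
    have := integral_mono_ae (integrable_condExp.sub hL).abs (integrable_const δ) hGL'
    simp only [integral_const, probReal_univ, one_smul, Pi.sub_apply] at this
    linarith
  have hden : γ ≤ ∫ ω, f ω ∂μ := by
    rw [← integral_condExp hm₁, ← integral_congr_ae hG]
    simpa using integral_mono_ae (integrable_const γ) hGi hGγ
  exact div_le_div₀ (by positivity) hnum hγ hden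

end CondExp

lemma tendsto_sub_div_atTop_prod_Icc (a b : ℝ) {c d : ℝ} (hc : 0 < c) (hd : 0 < d) :
    Tendsto (fun q : ℝ × ℝ × ℝ => (q.1 - q.2.1) / q.2.2)
      (atTop ×ˢ 𝓟 (Icc a b ×ˢ Icc c d)) atTop := by
  refine tendsto_atTop_mono' _ ?_
    ((tendsto_atTop_add_const_right _ (-b) tendsto_fst).atTop_div_const hd)
  filter_upwards [(eventually_ge_atTop b).prod_inl _,
    (eventually_principal.2 fun p hp => hp).prod_inr _] with ⟨y, v, w⟩ hy hq
  obtain ⟨⟨-, hvb⟩, hcw, hwd⟩ := hq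
  exact div_le_div₀ (by linarith) (by linarith) (hc.trans_le hcw) hwd

lemma tendsto_div_fst_nhds_zero_prod_Icc (a b c d : ℝ) :
    Tendsto (fun q : ℝ × ℝ × ℝ => q.2.1 / q.1) (atTop ×ˢ 𝓟 (Icc a b ×ˢ Icc c d)) (𝓝 0) := by
  refine squeeze_zero_norm' ?_ ((tendsto_const_nhds (x := max |a| |b|)).div_atTop tendsto_fst)
  filter_upwards [(eventually_gt_atTop 0).prod_inl _,
    (eventually_principal.2 fun p hp => hp).prod_inr _] with q hy hq
  rw [norm_div, Real.norm_of_nonneg hy.le]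
  gcongr
  exact abs_le_max_abs_abs hq.1.1 hq.1.2

theorem tendsto_rpow_mul_apply_sub_div_div_rpow {S : ℝ → ℝ} {α C : ℝ}
    (hS : Tendsto (fun t => t ^ α * S t) atTop (𝓝 C)) (a b : ℝ) {c d : ℝ} (hc : 0 < c)
    (hd : 0 < d) :
    Tendsto (fun q : ℝ × ℝ × ℝ => q.1 ^ α * S ((q.1 - q.2.1) / q.2.2) / q.2.2 ^ α)
      (atTop ×ˢ 𝓟 (Icc a b ×ˢ Icc c d)) (𝓝 C) := by
  have hr : Tendsto (fun q : ℝ × ℝ × ℝ => (1 - q.2.1 / q.1) ^ (-α))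
      (atTop ×ˢ 𝓟 (Icc a b ×ˢ Icc c d)) (𝓝 1) := by
    simpa using ((tendsto_div_fst_nhds_zero_prod_Icc a b c d).const_sub 1).rpow_const
      (Or.inl (by norm_num)) (p := -α)
  -- `y ^ α * S t / w ^ α = (1 - v / y) ^ (-α) * (t ^ α * S t)` for `t = (y - v) / w`
  refine (one_mul C ▸ hr.mul (hS.comp (tendsto_sub_div_atTop_prod_Icc a b hc hd))).congr' ?_
  filter_upwards [(eventually_gt_atTop (max 0 b)).prod_inl _,
    (eventually_principal.2 fun p hp => hp).prod_inr _] with ⟨y, v, w⟩ hy hq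
  obtain ⟨⟨-, hvb⟩, hcw, -⟩ := hq
  have hy0 : 0 < y := (le_max_left _ _).trans_lt hy
  have hyv : 0 < y - v := by linarith [le_max_right 0 b]
  have hw : 0 < w := hc.trans_le hcw
  have hyvα : 0 < (y - v) ^ α := Real.rpow_pos_of_pos hyv α
  have hsub : 1 - v / y = (y - v) / y := by field_simp
  simp only [Function.comp_apply]
  rw [hsub, Real.rpow_neg (by positivity), Real.div_rpow hyv.le hy0.le, Real.div_rpow hyv.le hw.le]
  field_simp

theorem abs_sub_le_and_le_of_abs_rpow_mul_div_sub_lt {s y w c d α C ε : ℝ} (hy : 0 < y)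
    (hc : 0 < c) (hw : w ∈ Icc c d) (hα : 0 ≤ α) (hεC : ε ≤ C / 2)
    (h : |y ^ α * s / w ^ α - C| < ε) :
    |s - C * w ^ α / y ^ α| ≤ ε * d ^ α / y ^ α ∧ C * c ^ α / 2 / y ^ α ≤ s := by
  have hyα : 0 < y ^ α := Real.rpow_pos_of_pos hy α
  have hw0 : 0 < w := hc.trans_le hw.1
  have hwα : 0 < w ^ α := Real.rpow_pos_of_pos hw0 α
  have hwd : w ^ α ≤ d ^ α := Real.rpow_le_rpow hw0.le hw.2 hα
  have hcw : c ^ α ≤ w ^ α := Real.rpow_le_rpow hc.le hw.1 hα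
  have hε : 0 ≤ ε := (abs_nonneg _).trans h.le
  have hC : 0 ≤ C - ε := by linarith
  obtain ⟨h1, h2⟩ := abs_lt.1 h
  rw [lt_sub_iff_add_lt, lt_div_iff₀ hwα] at h1
  rw [sub_lt_iff_lt_add, div_lt_iff₀ hwα] at h2
  constructor
  · rw [show s - C * w ^ α / y ^ α = (y ^ α * s - C * w ^ α) / y ^ α by field_simp, abs_div,
      abs_of_pos hyα]
    gcongr
    rw [abs_le]
    constructor <;> nlinarith [mul_le_mul_of_nonneg_left hwd hε]
  · rw [div_le_iff₀ hyα]
    nlinarith [mul_le_mul_of_nonneg_left hcw hC]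

theorem tail_ratio_le_of_forall_abs_sub_lt {Ω : Type*} [MeasurableSpace Ω] {μ : Measure Ω}
    [IsProbabilityMeasure μ] {V W ξ : Ω → ℝ} (hV : Measurable V) (hW : Measurable W)
    (hξ : Measurable ξ) (hI : IndepFun (fun ω => (V ω, W ω)) ξ μ) {a b c d : ℝ} (hc : 0 < c)
    (hVrange : ∀ᵐ ω ∂μ, V ω ∈ Icc a b) (hWrange : ∀ᵐ ω ∂μ, W ω ∈ Icc c d) {S : ℝ → ℝ}
    (hS : ∀ y, S y = (μ {ω | y < ξ ω}).toReal) {α C ε y : ℝ} (hα : 0 ≤ α) (hC : 0 < C)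
    (hεC : ε ≤ C / 2) (hy : 0 < y)
    (hg : ∀ v ∈ Icc a b, ∀ w ∈ Icc c d, |y ^ α * S ((y - v) / w) / w ^ α - C| < ε) :
    (∫ ω, |(μ[(fun ω' => if y < V ω' + W ω' * ξ ω' then (1:ℝ) else 0)|
            MeasurableSpace.comap (fun ω => (V ω, W ω)) inferInstance]) ω
          - (μ[(fun ω' => if y < V ω' + W ω' * ξ ω' then (1:ℝ) else 0)|
            MeasurableSpace.comap W inferInstance]) ω| ∂μ)
        / (μ {ω | y < V ω + W ω * ξ ω}).toReal ≤ 4 * d ^ α / (C * c ^ α) * ε := by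
  have hbounds {v w : ℝ} (hv : v ∈ Icc a b) (hw : w ∈ Icc c d) :=
    abs_sub_le_and_le_of_abs_rpow_mul_div_sub_lt hy hc hw hα hεC (hg v hv w hw)
  have hWpos : ∀ᵐ ω ∂μ, 0 < W ω := hWrange.mono fun ω hω => hc.trans_le hω.1
  have hG := condExp_indicator_lt_add_mul_ae_eq hV hW hξ hI hWpos y
  simp only [← hS] at hG
  have hLm : StronglyMeasurable[MeasurableSpace.comap W inferInstance]
      fun ω => C * W ω ^ α / y ^ α :=
    ((by fun_prop : Measurable fun w : ℝ => C * w ^ α / y ^ α).comp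
      (comap_measurable W)).stronglyMeasurable
  have hL : Integrable (fun ω => C * W ω ^ α / y ^ α) μ := by
    refine .of_bound (hLm.mono hW.comap_le).aestronglyMeasurable (C * d ^ α / y ^ α) ?_
    filter_upwards [hWrange] with ω hω
    have hW0 : 0 < W ω := hc.trans_le hω.1
    rw [Real.norm_of_nonneg (by positivity)]
    gcongr
    exact hω.2
  have hsum := integral_abs_condExp_sub_condExp_div_integral_le
    (measurable_snd.comp (comap_measurable fun ω => (V ω, W ω))).comap_le
    (hV.prodMk hW).comap_le hG.symm hLm hL (δ := ε * d ^ α / y ^ α)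
    (γ := C * c ^ α / 2 / y ^ α) (by positivity)
    (by filter_upwards [hVrange, hWrange] with ω hv hw using (hbounds hv hw).1)
    (by filter_upwards [hVrange, hWrange] with ω hv hw using (hbounds hv hw).2)
  have hY : MeasurableSet {ω | y < V ω + W ω * ξ ω} :=
    measurableSet_lt measurable_const (by fun_prop)
  rw [← measureReal_def, ← integral_indicator_one hY]
  refine hsum.trans_eq ?_
  field_simp
  ring

theorem tendsto_nhds_zero_of_forall_eventually_le_mul {ι : Type*} {l : Filter ι} {F : ι → ℝ}
    {K ε₀ : ℝ} (hF : ∀ x, 0 ≤ F x) (hK : 0 ≤ K) (hε₀ : 0 < ε₀)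
    (h : ∀ ε, 0 < ε → ε ≤ ε₀ → ∀ᶠ x in l, F x ≤ K * ε) : Tendsto F l (𝓝 0) := by
  refine tendsto_order.2 ⟨fun a ha => .of_forall fun x => ha.trans_le (hF x), fun a ha => ?_⟩
  set ε := min ε₀ (a / (2 * (K + 1)))
  have hε : 0 < ε := lt_min hε₀ (by positivity)
  have hKε : K * ε < a := by
    calc K * ε ≤ (K + 1) * (a / (2 * (K + 1))) := by
          gcongr
          · linarith
          · exact min_le_right _ _
      _ < a := by field_simp; linarith
  filter_upwards [h ε hε (min_le_left _ _)] with x hx using hx.trans_lt hKε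

/-- **additive heavy-tailed model satisfies TCI.** Let `Y = V + W ξ` with
`V ∈ [a,b]`, `W ∈ [c,d]` (with `0 < c < d`), `V, W, ξ` mutually independent, `ξ` with
continuous survival function `S_ξ` satisfying `y^α S_ξ(y) → C > 0`, `V` and `W` with densities
`f₁, f₂`, and `E[W^{2α}] < ∞`. Then `E|P(Y>y|V,W) - P(Y>y|W)|/P(Y>y) → 0` as `y → ∞`. -/
theorem stmt_19 {Ω : Type*} [MeasurableSpace Ω] (μ : Measure Ω) [IsProbabilityMeasure μ]
    (V W ξ : Ω → ℝ) (hV : Measurable V) (hW : Measurable W) (hξ : Measurable ξ)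
    (hindep : iIndepFun ![V, W, ξ] μ)
    (a b c d : ℝ) (hab : a < b) (hc : 0 < c) (hcd : c < d)
    (hVrange : ∀ᵐ ω ∂μ, V ω ∈ Set.Icc a b)
    (hWrange : ∀ᵐ ω ∂μ, W ω ∈ Set.Icc c d)
    (Sξ : ℝ → ℝ) (hSdef : ∀ y, Sξ y = (μ {ω | y < ξ ω}).toReal) (hScont : Continuous Sξ)
    (α C : ℝ) (hα : 0 < α) (hC : 0 < C)
    (hreg : Tendsto (fun y => y ^ α * Sξ y) atTop (𝓝 C))
    (f1 f2 : ℝ → ℝ) (hf1m : Measurable f1) (hf2m : Measurable f2)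
    (hf1 : μ.map V = MeasureTheory.volume.withDensity (fun v => ENNReal.ofReal (f1 v)))
    (hf2 : μ.map W = MeasureTheory.volume.withDensity (fun w => ENNReal.ofReal (f2 w)))
    (hWmom : Integrable (fun ω => W ω ^ (2 * α)) μ)
    (mVW mW : MeasurableSpace Ω)
    (hmVW : mVW = MeasurableSpace.comap (fun ω => (V ω, W ω)) inferInstance)
    (hmW : mW = MeasurableSpace.comap W inferInstance) :
    Tendsto (fun y =>
      (∫ ω, |(μ[(fun ω' => if y < V ω' + W ω' * ξ ω' then (1:ℝ) else 0)|mVW]) ω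
            - (μ[(fun ω' => if y < V ω' + W ω' * ξ ω' then (1:ℝ) else 0)|mW]) ω| ∂μ)
        / (μ {ω | y < V ω + W ω * ξ ω}).toReal) atTop (𝓝 0) := by
  subst hmVW hmW
  have hI : IndepFun (fun ω => (V ω, W ω)) ξ μ :=
    hindep.indepFun_prodMk (fun i => by fin_cases i <;> assumption) 0 1 2 (by decide) (by decide)
  have hd : 0 < d := hc.trans hcd
  have hunif := tendsto_rpow_mul_apply_sub_div_div_rpow hreg a b hc hd
  refine tendsto_nhds_zero_of_forall_eventually_le_mul (K := 4 * d ^ α / (C * c ^ α))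
    (fun y => div_nonneg (integral_nonneg fun _ => abs_nonneg _) ENNReal.toReal_nonneg)
    (by positivity) (half_pos hC) fun ε hε hεC => ?_
  filter_upwards [eventually_prod_principal_iff.1 (Metric.tendsto_nhds.1 hunif ε hε),
    eventually_gt_atTop 0] with y hy hy0
  exact tail_ratio_le_of_forall_abs_sub_lt hV hW hξ hI hc hVrange hWrange hSdef hα.le hC hεC hy0
    fun v hv w hw => hy (v, w) ⟨hv, hw⟩
end
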